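/- arXiv:2204.01034 — 6 statements merged into one kernel-verified Lean document; each statement's English description precedes it below -/
import Mathlib

section
/- Suppose g = λ • v for some scalar λ ∈ ℝ, and suppose there exists ρ ∈ ℝⁿ with ⟨f_i, ρ⟩ = −(h i) for every index i. Then h = 0. (For the compatibility equations to have a solution, every vertically contact element must be horizontally contact.) -/
/-- Suppose `g = λ • v` for some scalar `λ`, and suppose there exists `ρ ∈ ℝⁿ` with
`⟨f_i, ρ⟩ = −(h i)` for every index `i`. Then `h = 0`: for the compatibility equations
to have a solution, every vertically contact element must be horizontally contact. -/
theorem horizontal_contact_of_vertical_contact (n : ℕ)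
    (v g h : EuclideanSpace ℝ (Fin n)) (lam : ℝ) (hg : g = lam • v)
    (hsol : ∃ ρ : EuclideanSpace ℝ (Fin n),
      ∀ i : Fin n, (inner ℝ (v i • g - g i • v) ρ : ℝ) = -(h i)) :
    h = 0 := by
  obtain ⟨ρ, hρ⟩ := hsol
  ext i
  have h1 := hρ i
  have h2 : v i • g - g i • v = 0 := by
    subst hg
    simp [PiLp.smul_apply, smul_smul, mul_comm]
  rw [h2, inner_zero_left] at h1
  simpa using h1.symm
end

section
/- If the vectors v and g are linearly independent, then there exist indices i and j with f_{ij} ≠ 0, and for any such indices the two vectors f_i and f_j are linearly independent. -/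
/-- If the vectors `v` and `g` are linearly independent, then there exist indices `i` and
`j` with `f_{ij} ≠ 0`, and for any such indices the two vectors `f_i` and `f_j` are
linearly independent. -/
theorem exists_fij_ne_zero_and_f_linearIndependent (n : ℕ) (v g : Fin n → ℝ)
    (hind : LinearIndependent ℝ ![v, g]) :
    (∃ i j : Fin n, v i * g j - v j * g i ≠ 0) ∧
    ∀ i j : Fin n, v i * g j - v j * g i ≠ 0 →
      LinearIndependent ℝ ![v i • g - g i • v, v j • g - g j • v] := by
  rw [LinearIndependent.pair_iff] at hind
  constructor
  · by_contra h
    push_neg at h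
    have hv : v ≠ 0 := by
      intro hv0
      have := (hind 1 0 (by simp [hv0])).1
      norm_num at this
    obtain ⟨i, hi⟩ := Function.ne_iff.mp hv
    have h2 := (hind (g i) (-(v i)) ?_).2
    · simp only [neg_eq_zero] at h2
      exact hi (by simpa using h2)
    · funext k
      have hk := h i k
      simp [Pi.add_apply, Pi.smul_apply, smul_eq_mul]
      linarith
  · intro i j hij
    rw [LinearIndependent.pair_iff]
    intro s t hst
    have h1 : (-(s * g i + t * g j)) • v + (s * v i + t * v j) • g = 0 := by
      funext k
      have hk := congrFun hst k
      simp [Pi.add_apply, Pi.smul_apply, Pi.sub_apply, smul_eq_mul] at hk ⊢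
      ring_nf
      ring_nf at hk
      linarith
    obtain ⟨ha, hb⟩ := hind _ _ h1
    have ha' : s * g i + t * g j = 0 := by linarith [neg_eq_zero.mp ha]
    constructor
    · have hs : s * (v i * g j - v j * g i) = 0 := by linear_combination g j * hb - v j * ha'
      exact (mul_eq_zero.mp hs).resolve_right hij
    · have ht : t * (v i * g j - v j * g i) = 0 := by linear_combination v i * ha' - g i * hb
      exact (mul_eq_zero.mp ht).resolve_right hij
end

section
/- If v and g are linearly independent, then the set of solutions ρ ∈ ℝⁿ of the homogeneous system ⟨f_i, ρ⟩ = 0 (for all i = 1,…,n) is exactly the orthogonal complement of the linear span of v and g (equivalently, of the intersection of the linear tangent hyperplanes ℒF_v ∩ ℒR_v). -/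
/-- If `v` and `g` are linearly independent, then the set of solutions `ρ ∈ ℝⁿ` of the
homogeneous system `⟨f_i, ρ⟩ = 0` (for all `i`) is exactly the orthogonal complement of
the linear span of `v` and `g`. -/
theorem homogeneous_solutions_eq_orthogonal_complement (n : ℕ)
    (v g : EuclideanSpace ℝ (Fin n)) (hind : LinearIndependent ℝ ![v, g]) :
    {ρ : EuclideanSpace ℝ (Fin n) |
        ∀ i : Fin n, (inner ℝ (v i • g - g i • v) ρ : ℝ) = 0} =
      ((Submodule.span ℝ {v, g})ᗮ : Submodule ℝ (EuclideanSpace ℝ (Fin n))) := by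
  ext ρ
  simp only [Set.mem_setOf_eq, SetLike.mem_coe, Submodule.mem_orthogonal]
  constructor
  · intro h
    have key : ∀ i, v i * (inner ℝ g ρ : ℝ) - g i * (inner ℝ v ρ : ℝ) = 0 := by
      intro i
      have := h i
      rwa [inner_sub_left, real_inner_smul_left, real_inner_smul_left] at this
    have hvec : (inner ℝ g ρ : ℝ) • v + (-(inner ℝ v ρ : ℝ)) • g = 0 := by
      ext i
      have := key i
      simp only [PiLp.add_apply, PiLp.smul_apply, PiLp.zero_apply, smul_eq_mul]
      linarith
    obtain ⟨h1, h2⟩ := LinearIndependent.pair_iff.mp hind _ _ hvec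
    intro u hu
    have : u ∈ Submodule.span ℝ {v, g} := hu
    rw [Submodule.mem_span_pair] at this
    obtain ⟨a, b, rfl⟩ := this
    rw [inner_add_left, real_inner_smul_left, real_inner_smul_left, h1,
      neg_eq_zero.mp h2]
    ring
  · intro h i
    have hv : (inner ℝ v ρ : ℝ) = 0 := h v (Submodule.subset_span (by simp))
    have hg : (inner ℝ g ρ : ℝ) = 0 := h g (Submodule.subset_span (by simp))
    rw [inner_sub_left, real_inner_smul_left, real_inner_smul_left, hv, hg]
    ring
end

section
/- Suppose v and g are linearly independent and f_{ij} ≠ 0 for fixed indices i ≠ j. Then there exists ρ ∈ ℝⁿ with ⟨f_k, ρ⟩ = −(h k) for every index k if and only if f_{ij} * (h k) + f_{jk} * (h i) + f_{ki} * (h j) = 0 for every index k. -/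
/-- Suppose `v` and `g` are linearly independent and `f_{ij} ≠ 0` for fixed indices
`i ≠ j`. Then there exists `ρ ∈ ℝⁿ` with `⟨f_k, ρ⟩ = −(h k)` for every index `k` if and
only if `f_{ij} * (h k) + f_{jk} * (h i) + f_{ki} * (h j) = 0` for every index `k`. -/
theorem solvable_iff_cyclic_conditions (n : ℕ) (v g h : EuclideanSpace ℝ (Fin n))
    (hind : LinearIndependent ℝ ![v, g]) (i j : Fin n) (hij : i ≠ j)
    (hfij : v i * g j - v j * g i ≠ 0) :
    (∃ ρ : EuclideanSpace ℝ (Fin n),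
        ∀ k : Fin n, (inner ℝ (v k • g - g k • v) ρ : ℝ) = -(h k)) ↔
      ∀ k : Fin n,
        (v i * g j - v j * g i) * h k + (v j * g k - v k * g j) * h i +
          (v k * g i - v i * g k) * h j = 0 := by
  constructor
  · rintro ⟨ρ, hρ⟩ k
    have hk := hρ k
    have hi := hρ i
    have hj := hρ j
    simp only [inner_sub_left, real_inner_smul_left] at hk hi hj
    linear_combination (v i * g j - v j * g i) * hk +
      (v j * g k - v k * g j) * hi + (v k * g i - v i * g k) * hj
  · intro hcyc
    refine ⟨EuclideanSpace.single i (h j / (v i * g j - v j * g i)) +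
      EuclideanSpace.single j (-h i / (v i * g j - v j * g i)), fun k => ?_⟩
    rw [inner_add_right, EuclideanSpace.inner_single_right,
      EuclideanSpace.inner_single_right]
    have e1 : (v k • g - g k • v) i = v k * g i - g k * v i := by
      simp [PiLp.sub_apply, PiLp.smul_apply, smul_eq_mul]
    have e2 : (v k • g - g k • v) j = v k * g j - g k * v j := by
      simp [PiLp.sub_apply, PiLp.smul_apply, smul_eq_mul]
    rw [e1, e2]
    simp only [starRingEnd_apply, star_trivial]
    field_simp
    linear_combination hcyc k
end

section
/- Let n ≥ 2, let v : Fin n → ℝ, let V be the n×n real matrix each of whose rows equals v (V i j = v j), set ṽ := v 1 + ⋯ + v n, and suppose ε ≠ 0 and ε ≠ ṽ. If ρ, b : Fin n → ℝ satisfy (V − ε•I).mulVec ρ = b, then for every index k, ρ k = (1/ε) * ((1/(ṽ − ε)) * Σ_l (v l) * (b l) − b k). (Explicit formula, without integration, for the only possible components ρ_k of the 1-form of a semi-symmetric compatible linear connection.) -/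
/-- Explicit formula for the only possible components `ρ k` of the 1-form of a
semi-symmetric compatible linear connection: if `(V − ε•I).mulVec ρ = b` with `V` the
matrix all of whose rows are `v`, `ε ≠ 0` and `ε ≠ ṽ := ∑ j, v j`, then for every `k`,
`ρ k = (1/ε) * ((1/(ṽ − ε)) * ∑ l, v l * b l − b k)`. -/
theorem rho_explicit_formula (n : ℕ) (hn : 2 ≤ n) (v : Fin n → ℝ) (ε : ℝ)
    (hε : ε ≠ 0) (hε' : ε ≠ ∑ j : Fin n, v j) (ρ b : Fin n → ℝ)
    (hsys : ((Matrix.of fun _ j : Fin n => v j) -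
        ε • (1 : Matrix (Fin n) (Fin n) ℝ)).mulVec ρ = b) :
    ∀ k : Fin n,
      ρ k = (1 / ε) *
        ((1 / ((∑ j : Fin n, v j) - ε)) * (∑ l : Fin n, v l * b l) - b k) := by
  set S : ℝ := ∑ j : Fin n, v j * ρ j with hS
  have hcomp : ∀ k : Fin n, b k = S - ε * ρ k := by
    intro k
    have := congrFun hsys k
    simp [Matrix.mulVec, Matrix.sub_apply, Matrix.smul_apply, Matrix.one_apply,
      dotProduct, sub_mul, Finset.sum_sub_distrib, ite_mul,
      Finset.sum_ite_eq, mul_assoc] at this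
    linarith [this]
  have hsum : ∑ l : Fin n, v l * b l = ((∑ j : Fin n, v j) - ε) * S := by
    calc ∑ l : Fin n, v l * b l = ∑ l : Fin n, (v l * S - ε * (v l * ρ l)) := by
          apply Finset.sum_congr rfl; intro l _; rw [hcomp l]; ring
      _ = (∑ l : Fin n, v l) * S - ε * S := by
          rw [Finset.sum_sub_distrib, ← Finset.sum_mul, ← Finset.mul_sum]
      _ = ((∑ j : Fin n, v j) - ε) * S := by ring
  intro k
  have hne : (∑ j : Fin n, v j) - ε ≠ 0 := sub_ne_zero.mpr (Ne.symm hε')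
  rw [hsum]
  field_simp
  have := hcomp k
  nlinarith [this]
end

section
/- Let U ⊆ ℝⁿ be a nonempty open set, let g : ℝⁿ → ℝⁿ and h : ℝⁿ → ℝⁿ be arbitrary functions such that for every v ∈ U the vectors v and g(v) are linearly independent, and for each v define f_i(v) := (v i) • g(v) − (g(v) i) • v. If ρ and ρ' in ℝⁿ both satisfy ⟨f_i(v), ρ⟩ = −(h(v) i) and ⟨f_i(v), ρ'⟩ = −(h(v) i) for every v ∈ U and every index i, then ρ = ρ'. (At most one 1-form ρ can solve the compatibility equations over an open set of non-vertically-contact elements; this is the linear-algebra core of the theorem that a non-Riemannian Finsler manifold admits at most one semi-symmetric compatible linear connection.) -/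
/-!
The difference `δ = ρ - ρ'` satisfies `⟪v i • g v - g v i • v, δ⟫ = 0` for all `i`, i.e. the vector
`⟪g v, δ⟫ • v - ⟪v, δ⟫ • g v` vanishes; since `v` and `g v` are independent, `⟪v, δ⟫ = 0` for every
`v ∈ U`. A linear functional vanishing on a nonempty open set is zero, so `δ = 0`.
-/

open scoped RealInnerProductSpace

theorem eq_zero_of_forall_inner_eq_zero_of_isOpen {E : Type*} [NormedAddCommGroup E]
    [InnerProductSpace ℝ E] {U : Set E} (hU : IsOpen U) (hne : U.Nonempty) {δ : E}
    (h : ∀ v ∈ U, ⟪v, δ⟫ = 0) : δ = 0 := by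
  have hU_sub : U ⊆ (ℝ ∙ δ)ᗮ := fun v hv =>
    Submodule.mem_orthogonal_singleton_iff_inner_left.2 (h v hv)
  have htop : (ℝ ∙ δ)ᗮ = ⊤ :=
    Submodule.eq_top_of_nonempty_interior' _ (hne.mono (interior_maximal hU_sub hU))
  rwa [Submodule.orthogonal_eq_top_iff, Submodule.span_singleton_eq_bot] at htop

theorem EuclideanSpace.inner_coord_smul_sub_coord_smul {ι : Type*} [Fintype ι]
    (v w δ : EuclideanSpace ℝ ι) (i : ι) :
    ⟪v i • w - w i • v, δ⟫ = (⟪w, δ⟫ • v - ⟪v, δ⟫ • w) i := by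
  simp only [inner_sub_left, real_inner_smul_left, PiLp.sub_apply, PiLp.smul_apply, smul_eq_mul]
  ring

theorem EuclideanSpace.inner_eq_zero_of_forall_inner_coord_smul_sub_eq_zero {ι : Type*}
    [Fintype ι] {v w δ : EuclideanSpace ℝ ι} (hvw : LinearIndependent ℝ ![v, w])
    (h : ∀ i, ⟪v i • w - w i • v, δ⟫ = 0) : ⟪v, δ⟫ = 0 := by
  have hcomb : ⟪w, δ⟫ • v - ⟪v, δ⟫ • w = 0 := by
    ext i
    rw [← inner_coord_smul_sub_coord_smul]
    exact h i
  rw [sub_eq_add_neg, ← neg_smul] at hcomb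
  exact neg_eq_zero.1 (LinearIndependent.pair_iff.1 hvw _ _ hcomb).2

/-- At most one 1-form `ρ` can solve the compatibility equations over a nonempty open set
of non-vertically-contact elements: the linear-algebra core of the unicity of the
semi-symmetric compatible linear connection. -/
theorem rho_unique (n : ℕ) (U : Set (EuclideanSpace ℝ (Fin n))) (hUo : IsOpen U)
    (hne : U.Nonempty)
    (g h : EuclideanSpace ℝ (Fin n) → EuclideanSpace ℝ (Fin n))
    (hind : ∀ v ∈ U, LinearIndependent ℝ ![v, g v])
    (ρ ρ' : EuclideanSpace ℝ (Fin n))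
    (hρ : ∀ v ∈ U, ∀ i : Fin n,
      (inner ℝ (v i • g v - g v i • v) ρ : ℝ) = -(h v i))
    (hρ' : ∀ v ∈ U, ∀ i : Fin n,
      (inner ℝ (v i • g v - g v i • v) ρ' : ℝ) = -(h v i)) :
    ρ = ρ' := by
  have hdiff : ∀ v ∈ U, ⟪v, ρ - ρ'⟫ = 0 := fun v hv =>
    EuclideanSpace.inner_eq_zero_of_forall_inner_coord_smul_sub_eq_zero (hind v hv) fun i => by
      rw [inner_sub_right, hρ v hv i, hρ' v hv i, sub_self]
  exact sub_eq_zero.1 (eq_zero_of_forall_inner_eq_zero_of_isOpen hUo hne hdiff)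
end
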